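/- arXiv:2401.01976 — 3 statements merged into one kernel-verified Lean document; each statement's English description precedes it below -/
import Mathlib

section
/- Left pseudo-Ore condition (Lemma 2.4 of Beachy 1993): if (a,C₁,x^t) ≥ (b,C₂,y^t), i.e., there exist m×n matrices A₁,A₂ over R with a = bA₁, y^t = A₂x^t, and C₂A₁ = A₂C₁, then the equivalence classes agree: [a:C₁:x^t] = [b:C₂:y^t] in Σ⁻¹X, i.e., (a,C₁,x^t) ∼ (b,C₂,y^t). -/
open Matrix

variable {R X : Type*}

/-- Action of a matrix over `R` on a column of module elements. -/
def mulVecX [Ring R] [AddCommGroup X] [Module R X] {m n : ℕ}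
    (A : Matrix (Fin m) (Fin n) R) (x : Fin n → X) : Fin m → X :=
  fun i => ∑ j, A i j • x j

/-- An ordered triple `(a, C, xᵗ)` with `a ∈ Rⁿ`, `C` an `n × n` matrix, `x ∈ Xⁿ`. -/
structure Triple (R X : Type*) [Ring R] [AddCommGroup X] [Module R X] where
  n : ℕ
  a : Fin n → R
  C : Matrix (Fin n) (Fin n) R
  x : Fin n → X

namespace Triple

variable [Ring R] [AddCommGroup X] [Module R X]

/-- Block sum of ordered triples: `([a b], diag(C,D), [xᵗ; yᵗ])`. -/
def add (t s : Triple R X) : Triple R X where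
  n := t.n + s.n
  a := Fin.append t.a s.a
  C := (Matrix.fromBlocks t.C 0 0 s.C).submatrix
        (finSumFinEquiv (m := t.n) (n := s.n)).symm finSumFinEquiv.symm
  x := Fin.append t.x s.x

/-- The congruence relation `≡`: same size, witnessed by invertible matrices `U₁, U₂`
with `a = b U₁`, `yᵗ = U₂ xᵗ` and `C₂ U₁ = U₂ C₁`. -/
def Cong (t s : Triple R X) : Prop :=
  ∃ (h : t.n = s.n) (U₁ U₂ : Matrix (Fin t.n) (Fin t.n) R),
    IsUnit U₁ ∧ IsUnit U₂ ∧
    t.a = (fun j => s.a (Fin.cast h j)) ᵥ* U₁ ∧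
    (fun i => s.x (Fin.cast h i)) = mulVecX U₂ t.x ∧
    s.C.submatrix (Fin.cast h) (Fin.cast h) * U₁ = U₂ * t.C

/-- The relation `(a,C₁,xᵗ) ≥ (b,C₂,yᵗ)`: there are matrices `A₁, A₂` with
`a = b A₁`, `yᵗ = A₂ xᵗ` and `C₂ A₁ = A₂ C₁`. -/
def Ge (t s : Triple R X) : Prop :=
  ∃ A₁ A₂ : Matrix (Fin s.n) (Fin t.n) R,
    t.a = s.a ᵥ* A₁ ∧ s.x = mulVecX A₂ t.x ∧ s.C * A₁ = A₂ * t.C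

/-- The relation `(a,C₁,xᵗ) ≤ (b,C₂,yᵗ)`: there are matrices `A₁, A₂` with
`xᵗ = A₁ yᵗ`, `b = a A₂` and `C₁ A₂ = A₁ C₂`. -/
def Le (t s : Triple R X) : Prop :=
  ∃ A₁ A₂ : Matrix (Fin t.n) (Fin s.n) R,
    t.x = mulVecX A₁ s.x ∧ s.a = t.a ᵥ* A₂ ∧ t.C * A₂ = A₁ * s.C

end Triple

/-- A size-indexed collection of square matrices over `R`. -/
def MatSet (R : Type*) [Ring R] := ∀ n : ℕ, Set (Matrix (Fin n) (Fin n) R)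

/-- `S` is a multiplicative set of matrices: it contains all permutation matrices,
is closed under products, and closed under block upper triangular combinations. -/
def IsMatMultSet [Ring R] (S : MatSet R) : Prop :=
  (∀ (n : ℕ) (σ : Equiv.Perm (Fin n)), σ.permMatrix R ∈ S n) ∧
  (∀ (n : ℕ) (C D : Matrix (Fin n) (Fin n) R), C ∈ S n → D ∈ S n → C * D ∈ S n) ∧
  (∀ (n m : ℕ) (C : Matrix (Fin n) (Fin n) R) (D : Matrix (Fin m) (Fin m) R)
      (A : Matrix (Fin n) (Fin m) R), C ∈ S n → D ∈ S m →
    (Matrix.fromBlocks C A 0 D).submatrix finSumFinEquiv.symm finSumFinEquiv.symm ∈ S (n + m))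

/-- The trivial triples `Σ⁻¹X₀`: finite sums of triples `(0,C,xᵗ)` and `(b,D,0ᵗ)` with
`C, D ∈ Σ`. -/
inductive IsTrivial [Ring R] [AddCommGroup X] [Module R X] (S : MatSet R) :
    Triple R X → Prop
  | zeroA (n : ℕ) (C : Matrix (Fin n) (Fin n) R) (x : Fin n → X) (hC : C ∈ S n) :
      IsTrivial S ⟨n, 0, C, x⟩
  | zeroX (n : ℕ) (b : Fin n → R) (C : Matrix (Fin n) (Fin n) R) (hC : C ∈ S n) :
      IsTrivial S ⟨n, b, C, 0⟩
  | add {t s : Triple R X} : IsTrivial S t → IsTrivial S s → IsTrivial S (t.add s)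

/-- The relation `∼`: triples become congruent after adding trivial triples. -/
def Sim [Ring R] [AddCommGroup X] [Module R X] (S : MatSet R) (t s : Triple R X) : Prop :=
  ∃ z₁ z₂ : Triple R X, IsTrivial S z₁ ∧ IsTrivial S z₂ ∧ (t.add z₁).Cong (s.add z₂)

/-! Add the trivial triple `(b, C₂, 0)` to `(a, C₁, xᵗ)` and `(0, C₁, xᵗ)` to `(b, C₂, yᵗ)`.
The sums `([a b], diag(C₁, C₂), [xᵗ; 0])` and `([b 0], diag(C₂, C₁), [yᵗ; xᵗ])` are congruent
via `Uᵢ = [[Aᵢ, 1], [1, 0]]`, whose inverse is `[[0, 1], [1, -Aᵢ]]`: the relations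
`a = bA₁`, `yᵗ = A₂xᵗ`, `C₂A₁ = A₂C₁` are the leading blocks of the three congruence
conditions, and the remaining blocks hold trivially. -/

section MulVecX

variable [Ring R] [AddCommGroup X] [Module R X]

def mulVecX' {ι κ : Type*} [Fintype κ] (A : Matrix ι κ R) (x : κ → X) : ι → X :=
  fun i => ∑ j, A i j • x j

theorem mulVecX'_eq_mulVecX {m n : ℕ} (A : Matrix (Fin m) (Fin n) R) (x : Fin n → X) :
    mulVecX' A x = mulVecX A x := rfl

variable {ι κ : Type*} [Fintype κ]

theorem mulVecX'_submatrix_equiv {ι' κ' : Type*} [Fintype κ'] (A : Matrix ι κ R)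
    (e₁ : ι' → ι) (e₂ : κ' ≃ κ) (x : κ' → X) :
    mulVecX' (A.submatrix e₁ e₂) x = mulVecX' A (x ∘ e₂.symm) ∘ e₁ := by
  funext i
  exact Fintype.sum_equiv e₂ _ _ fun j => by simp

@[simp]
theorem one_mulVecX' [DecidableEq κ] (x : κ → X) : mulVecX' (1 : Matrix κ κ R) x = x := by
  funext i
  simp [mulVecX', one_apply, ite_smul]

@[simp]
theorem mulVecX'_zero (A : Matrix ι κ R) : mulVecX' A (0 : κ → X) = 0 := by
  funext i
  simp [mulVecX']

theorem mulVecX'_fromBlocks {ι' κ' : Type*} [Fintype κ'] (A : Matrix ι κ R) (B : Matrix ι κ' R)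
    (C : Matrix ι' κ R) (D : Matrix ι' κ' R) (x : κ → X) (y : κ' → X) :
    mulVecX' (fromBlocks A B C D) (Sum.elim x y) =
      Sum.elim (mulVecX' A x + mulVecX' B y) (mulVecX' C x + mulVecX' D y) := by
  funext i
  cases i <;> simp [mulVecX', Fintype.sum_sum_type]

end MulVecX

namespace Matrix

variable {m n α : Type*} [Fintype m] [Fintype n] [DecidableEq m] [DecidableEq n] [Ring α]

theorem fromBlocks_mul_fromBlocks_neg_eq_one (A : Matrix m n α) :
    fromBlocks A (1 : Matrix m m α) (1 : Matrix n n α) 0 *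
      fromBlocks (0 : Matrix n m α) 1 1 (-A) = 1 := by
  simp [fromBlocks_multiply, fromBlocks_one]

theorem fromBlocks_neg_mul_fromBlocks_eq_one (A : Matrix m n α) :
    fromBlocks 0 (1 : Matrix n n α) (1 : Matrix m m α) (-A) *
      fromBlocks A (1 : Matrix m m α) (1 : Matrix n n α) 0 = 1 := by
  simp [fromBlocks_multiply, fromBlocks_one]

end Matrix

namespace Triple

variable [Ring R] [AddCommGroup X] [Module R X]

theorem cong_of_reindex {t s : Triple R X} {ι κ : Type*} [Fintype ι] [Fintype κ]
    [DecidableEq ι] [DecidableEq κ] (h : t.n = s.n) (eₜ : κ ≃ Fin t.n) (eₛ : ι ≃ Fin s.n)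
    {U₁ U₂ : Matrix ι κ R} {V₁ V₂ : Matrix κ ι R}
    (hUV₁ : U₁ * V₁ = 1) (hVU₁ : V₁ * U₁ = 1) (hUV₂ : U₂ * V₂ = 1) (hVU₂ : V₂ * U₂ = 1)
    (ha : (s.a ∘ eₛ) ᵥ* U₁ = t.a ∘ eₜ)
    (hx : mulVecX' U₂ (t.x ∘ eₜ) = s.x ∘ eₛ)
    (hC : s.C.submatrix eₛ eₛ * U₁ = U₂ * t.C.submatrix eₜ eₜ) :
    t.Cong s := by
  set e := (finCongr h).trans eₛ.symm
  have isUnit_submatrix {U : Matrix ι κ R} {V : Matrix κ ι R} (hUV : U * V = 1)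
      (hVU : V * U = 1) : IsUnit (U.submatrix e eₜ.symm) :=
    isUnit_iff_exists.mpr ⟨V.submatrix eₜ.symm e, by simp [hUV], by simp [hVU]⟩
  refine ⟨h, U₁.submatrix e eₜ.symm, U₂.submatrix e eₜ.symm, isUnit_submatrix hUV₁ hVU₁,
    isUnit_submatrix hUV₂ hVU₂, ?_, ?_, ?_⟩
  · have : (fun j => s.a (Fin.cast h j)) ∘ e.symm = s.a ∘ eₛ := by ext; simp [e]
    rw [submatrix_vecMul_equiv, this, ha]
    ext; simp
  · rw [← mulVecX'_eq_mulVecX, mulVecX'_submatrix_equiv, Equiv.symm_symm, hx]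
    ext; simp [e]
  · have hCs :
        s.C.submatrix (Fin.cast h) (Fin.cast h) = (s.C.submatrix eₛ eₛ).submatrix e e := by
      ext; simp [e]
    have hCt : t.C = (t.C.submatrix eₜ eₜ).submatrix eₜ.symm eₜ.symm := by simp
    rw [hCs, hCt, submatrix_mul_equiv, submatrix_mul_equiv, hC]

theorem add_a_comp_finSumFinEquiv (t s : Triple R X) :
    (t.add s).a ∘ finSumFinEquiv = Sum.elim t.a s.a := by
  ext (i | i) <;> simp [add]

theorem add_x_comp_finSumFinEquiv (t s : Triple R X) :
    (t.add s).x ∘ finSumFinEquiv = Sum.elim t.x s.x := by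
  ext (i | i) <;> simp [add]

theorem add_C_submatrix_finSumFinEquiv (t s : Triple R X) :
    (t.add s).C.submatrix finSumFinEquiv finSumFinEquiv = fromBlocks t.C 0 0 s.C := by
  simp [add]

theorem add_cong_add {t₁ t₂ s₁ s₂ : Triple R X} (h : t₁.n + t₂.n = s₁.n + s₂.n)
    {U₁ U₂ : Matrix (Fin s₁.n ⊕ Fin s₂.n) (Fin t₁.n ⊕ Fin t₂.n) R}
    {V₁ V₂ : Matrix (Fin t₁.n ⊕ Fin t₂.n) (Fin s₁.n ⊕ Fin s₂.n) R}
    (hUV₁ : U₁ * V₁ = 1) (hVU₁ : V₁ * U₁ = 1) (hUV₂ : U₂ * V₂ = 1) (hVU₂ : V₂ * U₂ = 1)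
    (ha : Sum.elim s₁.a s₂.a ᵥ* U₁ = Sum.elim t₁.a t₂.a)
    (hx : mulVecX' U₂ (Sum.elim t₁.x t₂.x) = Sum.elim s₁.x s₂.x)
    (hC : fromBlocks s₁.C 0 0 s₂.C * U₁ = U₂ * fromBlocks t₁.C 0 0 t₂.C) :
    (t₁.add t₂).Cong (s₁.add s₂) :=
  cong_of_reindex h finSumFinEquiv finSumFinEquiv hUV₁ hVU₁ hUV₂ hVU₂
    (by rwa [← add_a_comp_finSumFinEquiv, ← add_a_comp_finSumFinEquiv] at ha)
    (by rwa [← add_x_comp_finSumFinEquiv, ← add_x_comp_finSumFinEquiv] at hx)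
    (by rwa [← add_C_submatrix_finSumFinEquiv, ← add_C_submatrix_finSumFinEquiv] at hC)

end Triple

theorem ge_imp_sim_general [Ring R] [AddCommGroup X] [Module R X] (S : MatSet R)
    (t s : Triple R X) (ht : t.C ∈ S t.n) (hs : s.C ∈ S s.n)
    (h : t.Ge s) : Sim S t s := by
  obtain ⟨A₁, A₂, ha, hx, hC⟩ := h
  refine ⟨⟨s.n, s.a, s.C, 0⟩, ⟨t.n, 0, t.C, t.x⟩, .zeroX _ _ _ hs, .zeroA _ _ _ ht,
    Triple.add_cong_add (Nat.add_comm _ _)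
      (fromBlocks_mul_fromBlocks_neg_eq_one A₁) (fromBlocks_neg_mul_fromBlocks_eq_one A₁)
      (fromBlocks_mul_fromBlocks_neg_eq_one A₂) (fromBlocks_neg_mul_fromBlocks_eq_one A₂)
      ?_ ?_ ?_⟩
  · simp [vecMul_fromBlocks, ha]
  · simp [mulVecX'_fromBlocks, mulVecX'_eq_mulVecX, hx]
  · simp [fromBlocks_multiply, hC]

/-- Left pseudo-Ore condition: if `(a,C₁,xᵗ) ≥ (b,C₂,yᵗ)` then `(a,C₁,xᵗ) ∼ (b,C₂,yᵗ)`. -/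
theorem ge_imp_sim [Ring R] [AddCommGroup X] [Module R X] (S : MatSet R)
    (hS : IsMatMultSet S) (t s : Triple R X) (ht : t.C ∈ S t.n) (hs : s.C ∈ S s.n)
    (h : t.Ge s) : Sim S t s :=
  ge_imp_sim_general S t s ht hs h
end

section
/- Characterization of the localization equivalence via pseudo-Ore conditions: for triples (a,C,x^t) and (b,D,y^t) (with C ∈ Σ_n, D ∈ Σ_m), the following are equivalent: (1) (a,C,x^t) ∼ (b,D,y^t); (2) there exist u ∈ R^k, E,F ∈ Σ_k, z ∈ X^k (same size k) such that (a,C,x^t)+(0,E,z^t) ≥ (b,D,y^t)+(u,F,0^t); (3) there exist triples (a₁,C₁,x₁^t) and (b₁,D₁,y₁^t) with (a,C,x^t) ≤ (a₁,C₁,x₁^t), (a₁,C₁,x₁^t) ≥ (b₁,D₁,y₁^t), and (b₁,D₁,y₁^t) ≤ (b,D,y^t). -/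
open Matrix

variable {R X : Type*}

/-!
A triple with `a = 0` dominates every triple with `x = 0` (take zero matrices), and `≥` is
compatible with block sums; so every trivial triple `z` satisfies `(0,E,wᵗ) ≥ z ≥ (u,F,0ᵗ)` for
some `E, F ∈ Σ`. Hence `t + z₁ ≡ s + z₂` gives `t + (0,E,wᵗ) ≥ s + (u,F,0ᵗ)`, and padding both
added triples by identity blocks equalizes their sizes: this is (2). As
`t + (0,E,wᵗ) ≥ t ≥ t + (u,F,0ᵗ)`, (2) is a zigzag (3).

Conversely, if `t = (a,C,xᵗ) ≥ s = (b,D,yᵗ)` via `A₁, A₂`, the unitriangular matrices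
`[1 A₁; 0 1]` and `[1 A₂; 0 1]` give `(b,D,0ᵗ) + (0,C,xᵗ) ≡ s + (-a,C,xᵗ)`. Together with the
case `t ≥ t` this gives `t + ((b,D,0ᵗ) + (0,C,xᵗ)) ≡ s + ((a,C,0ᵗ) + (0,C,xᵗ))`, so `t ∼ s`;
transitivity of `∼` turns a zigzag into (1).
-/

section MulVecX
variable [Ring R] [AddCommGroup X] [Module R X] {l m n : ℕ}

@[simp] lemma mulVecX_one (x : Fin n → X) : mulVecX (1 : Matrix (Fin n) (Fin n) R) x = x := by
  funext i
  simp [mulVecX, one_apply, ite_smul]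

lemma mulVecX_mul (A : Matrix (Fin l) (Fin m) R) (B : Matrix (Fin m) (Fin n) R)
    (x : Fin n → X) : mulVecX (A * B) x = mulVecX A (mulVecX B x) := by
  funext i
  simp only [mulVecX, mul_apply, Finset.sum_smul, Finset.smul_sum, smul_smul]
  exact Finset.sum_comm

@[simp] lemma zero_mulVecX (x : Fin n → X) : mulVecX (0 : Matrix (Fin m) (Fin n) R) x = 0 := by
  funext i
  simp [mulVecX]

lemma mulVecX_toPEquiv_toMatrix (e : Fin m ≃ Fin n) (x : Fin n → X) :
    mulVecX (e.toPEquiv.toMatrix : Matrix (Fin m) (Fin n) R) x = x ∘ e := by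
  funext i
  simp [mulVecX, PEquiv.toMatrix_apply, ite_smul]

end MulVecX

lemma Fin.append_zero_zero {α : Type*} [Zero α] {m n : ℕ} :
    Fin.append (0 : Fin m → α) (0 : Fin n → α) = 0 := by
  funext i
  refine Fin.addCases (fun i => ?_) (fun i => ?_) i <;> simp

lemma isUnit_permMatrix [Semiring R] {n : ℕ} (σ : Equiv.Perm (Fin n)) :
    IsUnit (σ.permMatrix R) := by
  simpa using (Group.isUnit σ⁻¹).map (permMatrixHom (R := R))

section Blocks
variable {m n p q m' n' : ℕ}

def blocks (A : Matrix (Fin m) (Fin p) R) (B : Matrix (Fin m) (Fin q) R)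
    (C : Matrix (Fin n) (Fin p) R) (D : Matrix (Fin n) (Fin q) R) :
    Matrix (Fin (m + n)) (Fin (p + q)) R :=
  (fromBlocks A B C D).submatrix finSumFinEquiv.symm finSumFinEquiv.symm

section Entries
variable (A : Matrix (Fin m) (Fin p) R) (B : Matrix (Fin m) (Fin q) R)
  (C : Matrix (Fin n) (Fin p) R) (D : Matrix (Fin n) (Fin q) R)

@[simp] lemma blocks_castAdd_castAdd (i : Fin m) (j : Fin p) :
    blocks A B C D (Fin.castAdd n i) (Fin.castAdd q j) = A i j := by simp [blocks]

@[simp] lemma blocks_castAdd_natAdd (i : Fin m) (j : Fin q) :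
    blocks A B C D (Fin.castAdd n i) (Fin.natAdd p j) = B i j := by simp [blocks]

@[simp] lemma blocks_natAdd_castAdd (i : Fin n) (j : Fin p) :
    blocks A B C D (Fin.natAdd m i) (Fin.castAdd q j) = C i j := by simp [blocks]

@[simp] lemma blocks_natAdd_natAdd (i : Fin n) (j : Fin q) :
    blocks A B C D (Fin.natAdd m i) (Fin.natAdd p j) = D i j := by simp [blocks]

end Entries

lemma append_comp_finAddFlip {α : Type*} (u : Fin m → α) (v : Fin n → α) :
    Fin.append v u ∘ finAddFlip = Fin.append u v := by
  funext i
  refine Fin.addCases (fun i => ?_) (fun i => ?_) i <;> simp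

lemma blocks_submatrix_finAddFlip [Zero R] (A : Matrix (Fin m) (Fin m) R)
    (D : Matrix (Fin n) (Fin n) R) :
    (blocks D 0 0 A).submatrix finAddFlip finAddFlip = blocks A 0 0 D := by
  ext i j
  refine Fin.addCases (fun i => ?_) (fun i => ?_) i <;>
    refine Fin.addCases (fun j => ?_) (fun j => ?_) j <;> simp

lemma blocks_submatrix_finCongr_add_assoc [Zero R] (A : Matrix (Fin m) (Fin m) R)
    (B : Matrix (Fin n) (Fin n) R) (C : Matrix (Fin p) (Fin p) R) :
    (blocks A 0 0 (blocks B 0 0 C)).submatrix (finCongr (add_assoc m n p))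
      (finCongr (add_assoc m n p)) = blocks (blocks A 0 0 B) 0 0 C := by
  have hl (i : Fin m) : Fin.cast (add_assoc m n p) (Fin.castAdd p (Fin.castAdd n i)) =
      Fin.castAdd (n + p) i := rfl
  have hm (i : Fin n) : Fin.cast (add_assoc m n p) (Fin.castAdd p (Fin.natAdd m i)) =
      Fin.natAdd m (Fin.castAdd p i) := rfl
  have hr (i : Fin p) : Fin.cast (add_assoc m n p) (Fin.natAdd (m + n) i) =
      Fin.natAdd m (Fin.natAdd n i) := Fin.ext (Nat.add_assoc m n i)
  ext i j
  refine Fin.addCases (fun i => ?_) (fun i => ?_) i <;>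
    refine Fin.addCases (fun j => ?_) (fun j => ?_) j <;>
    try refine Fin.addCases (fun i => ?_) (fun i => ?_) i
  all_goals try refine Fin.addCases (fun j => ?_) (fun j => ?_) j
  all_goals simp [hl, hm, hr]

lemma blocks_mul_blocks [NonUnitalNonAssocSemiring R] (A : Matrix (Fin m) (Fin p) R)
    (B : Matrix (Fin m) (Fin q) R) (C : Matrix (Fin n) (Fin p) R) (D : Matrix (Fin n) (Fin q) R)
    (A' : Matrix (Fin p) (Fin m') R) (B' : Matrix (Fin p) (Fin n') R)
    (C' : Matrix (Fin q) (Fin m') R) (D' : Matrix (Fin q) (Fin n') R) :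
    blocks A B C D * blocks A' B' C' D' =
      blocks (A * A' + B * C') (A * B' + B * D') (C * A' + D * C') (C * B' + D * D') := by
  rw [blocks, blocks, submatrix_mul_equiv, fromBlocks_multiply, blocks]

@[simp] lemma blocks_one [Zero R] [One R] :
    blocks (1 : Matrix (Fin m) (Fin m) R) 0 0 (1 : Matrix (Fin n) (Fin n) R) = 1 := by
  rw [blocks, fromBlocks_one, submatrix_one_equiv]

lemma append_vecMul_blocks [NonUnitalNonAssocSemiring R] (a : Fin m → R) (b : Fin n → R)
    (A : Matrix (Fin m) (Fin p) R) (B : Matrix (Fin m) (Fin q) R) (C : Matrix (Fin n) (Fin p) R)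
    (D : Matrix (Fin n) (Fin q) R) :
    Fin.append a b ᵥ* blocks A B C D = Fin.append (a ᵥ* A + b ᵥ* C) (a ᵥ* B + b ᵥ* D) := by
  funext j
  refine Fin.addCases (fun j => ?_) (fun j => ?_) j <;>
    simp [blocks, vecMul, dotProduct, Fin.sum_univ_add]

lemma mulVecX_blocks_append [Ring R] [AddCommGroup X] [Module R X] (A : Matrix (Fin m) (Fin p) R)
    (B : Matrix (Fin m) (Fin q) R) (C : Matrix (Fin n) (Fin p) R) (D : Matrix (Fin n) (Fin q) R)
    (x : Fin p → X) (y : Fin q → X) :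
    mulVecX (blocks A B C D) (Fin.append x y) =
      Fin.append (mulVecX A x + mulVecX B y) (mulVecX C x + mulVecX D y) := by
  funext i
  refine Fin.addCases (fun i => ?_) (fun i => ?_) i <;>
    simp [blocks, mulVecX, Fin.sum_univ_add]

lemma isUnit_blocks_zero_zero [Semiring R] {U : Matrix (Fin m) (Fin m) R}
    {V : Matrix (Fin n) (Fin n) R} (hU : IsUnit U) (hV : IsUnit V) : IsUnit (blocks U 0 0 V) := by
  obtain ⟨U, rfl⟩ := hU
  obtain ⟨V, rfl⟩ := hV
  refine ⟨⟨blocks ↑U 0 0 ↑V, blocks ↑U⁻¹ 0 0 ↑V⁻¹, ?_, ?_⟩, rfl⟩ <;> simp [blocks_mul_blocks]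

lemma isUnit_blocks_one_zero_one [Ring R] (B : Matrix (Fin m) (Fin n) R) :
    IsUnit (blocks (1 : Matrix (Fin m) (Fin m) R) B 0 (1 : Matrix (Fin n) (Fin n) R)) := by
  refine ⟨⟨blocks 1 B 0 1, blocks 1 (-B) 0 1, ?_, ?_⟩, rfl⟩ <;> simp [blocks_mul_blocks]

end Blocks

namespace IsMatMultSet
variable [Ring R] {S : MatSet R}

lemma one_mem (hS : IsMatMultSet S) (n : ℕ) : (1 : Matrix (Fin n) (Fin n) R) ∈ S n := by
  simpa using hS.1 n 1

lemma blocks_mem (hS : IsMatMultSet S) {m n : ℕ} {A : Matrix (Fin m) (Fin m) R}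
    {D : Matrix (Fin n) (Fin n) R} (hA : A ∈ S m) (hD : D ∈ S n) : blocks A 0 0 D ∈ S (m + n) :=
  hS.2.2 m n A D 0 hA hD

end IsMatMultSet

namespace Triple
variable [Ring R] [AddCommGroup X] [Module R X] {t s r t' s' : Triple R X} {k l : ℕ}

lemma cong_mk_iff {n : ℕ} {a b : Fin n → R} {C D : Matrix (Fin n) (Fin n) R} {x y : Fin n → X} :
    Cong (⟨n, a, C, x⟩ : Triple R X) ⟨n, b, D, y⟩ ↔
      ∃ U₁ U₂ : Matrix (Fin n) (Fin n) R, IsUnit U₁ ∧ IsUnit U₂ ∧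
        a = b ᵥ* U₁ ∧ y = mulVecX U₂ x ∧ D * U₁ = U₂ * C :=
  -- by structure eta, `Fin.cast rfl` is definitionally the identity
  ⟨fun ⟨_, h⟩ => h, fun h => ⟨rfl, h⟩⟩

lemma Cong.n_eq (h : t.Cong s) : t.n = s.n := h.1

lemma Cong.of_equiv (e : Fin t.n ≃ Fin s.n) (ha : s.a ∘ e = t.a) (hx : s.x ∘ e = t.x)
    (hC : s.C.submatrix e e = t.C) : t.Cong s := by
  obtain ⟨n, a, C, x⟩ := t
  obtain ⟨m, b, D, y⟩ := s
  obtain rfl : n = m := Fin.equiv_iff_eq.mp ⟨e⟩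
  dsimp only at e ha hx hC
  rw [← ha, ← hx, ← hC]
  refine cong_mk_iff.mpr ⟨_, _, isUnit_permMatrix e.symm, isUnit_permMatrix e.symm, ?_, ?_, ?_⟩
  · rw [PEquiv.vecMul_toMatrix_toPEquiv, Equiv.symm_symm]
  · rw [mulVecX_toPEquiv_toMatrix, Function.comp_assoc, e.self_comp_symm, Function.comp_id]
  · rw [PEquiv.mul_toMatrix_toPEquiv, PEquiv.toMatrix_toPEquiv_mul, submatrix_submatrix,
      Equiv.symm_symm, e.self_comp_symm, Function.comp_id]

lemma Cong.refl (t : Triple R X) : t.Cong t :=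
  .of_equiv (Equiv.refl _) rfl rfl (submatrix_id_id _)

lemma Cong.symm (h : t.Cong s) : s.Cong t := by
  obtain ⟨n, a, C, x⟩ := t
  obtain ⟨m, b, D, y⟩ := s
  obtain rfl : n = m := h.n_eq
  obtain ⟨U₁, U₂, ⟨U₁, rfl⟩, ⟨U₂, rfl⟩, ha, hy, hC⟩ := cong_mk_iff.mp h
  refine cong_mk_iff.mpr ⟨↑U₁⁻¹, ↑U₂⁻¹, Units.isUnit _, Units.isUnit _, ?_, ?_, ?_⟩
  · rw [ha, vecMul_vecMul, Units.mul_inv, vecMul_one]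
  · rw [hy, ← mulVecX_mul, Units.inv_mul, mulVecX_one]
  · rw [Units.eq_inv_mul_iff_mul_eq, ← mul_assoc, ← hC, mul_assoc, Units.mul_inv, mul_one]

lemma Cong.trans (h : t.Cong s) (h' : s.Cong r) : t.Cong r := by
  obtain ⟨n, a, C, x⟩ := t
  obtain ⟨m, b, D, y⟩ := s
  obtain ⟨k, c, E, z⟩ := r
  obtain rfl : n = m := h.n_eq
  obtain rfl : n = k := h'.n_eq
  obtain ⟨U₁, U₂, hU₁, hU₂, ha, hy, hC⟩ := cong_mk_iff.mp h
  obtain ⟨V₁, V₂, hV₁, hV₂, hb, hz, hD⟩ := cong_mk_iff.mp h'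
  refine cong_mk_iff.mpr ⟨V₁ * U₁, V₂ * U₂, hV₁.mul hU₁, hV₂.mul hU₂, ?_, ?_, ?_⟩
  · rw [ha, hb, vecMul_vecMul]
  · rw [hz, hy, mulVecX_mul]
  · rw [← mul_assoc, hD, mul_assoc, hC, mul_assoc]

instance : IsTrans (Triple R X) Cong := ⟨fun _ _ _ => Cong.trans⟩

lemma Cong.add (h : t.Cong t') (h' : s.Cong s') : (t.add s).Cong (t'.add s') := by
  obtain ⟨n, a, C, x⟩ := t
  obtain ⟨n₁, a₁, C₁, x₁⟩ := t'
  obtain ⟨m, b, D, y⟩ := s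
  obtain ⟨m₁, b₁, D₁, y₁⟩ := s'
  obtain rfl : n = n₁ := h.n_eq
  obtain rfl : m = m₁ := h'.n_eq
  obtain ⟨U₁, U₂, hU₁, hU₂, ha, hx, hC⟩ := cong_mk_iff.mp h
  obtain ⟨V₁, V₂, hV₁, hV₂, hb, hy, hD⟩ := cong_mk_iff.mp h'
  refine cong_mk_iff.mpr ⟨blocks U₁ 0 0 V₁, blocks U₂ 0 0 V₂, isUnit_blocks_zero_zero hU₁ hV₁,
    isUnit_blocks_zero_zero hU₂ hV₂, ?_, ?_, ?_⟩
  · simp [append_vecMul_blocks, ha, hb]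
  · simp [mulVecX_blocks_append, hx, hy]
  · show blocks C₁ 0 0 D₁ * _ = _ * blocks C 0 0 D
    simp [blocks_mul_blocks, hC, hD]

def empty : Triple R X := ⟨0, 0, 0, 0⟩

lemma cong_add_empty (t : Triple R X) : t.Cong (t.add empty) := by
  refine .of_equiv (finCongr (add_zero t.n).symm) ?_ ?_ ?_
  · funext i; exact Fin.append_left _ _ i
  · funext i; exact Fin.append_left _ _ i
  · ext i j
    exact blocks_castAdd_castAdd t.C 0 0 (0 : Matrix (Fin 0) (Fin 0) R) i j

lemma add_comm_cong (t s : Triple R X) : (t.add s).Cong (s.add t) :=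
  .of_equiv finAddFlip (append_comp_finAddFlip _ _) (append_comp_finAddFlip _ _)
    (blocks_submatrix_finAddFlip _ _)

lemma add_assoc_cong (t s r : Triple R X) : ((t.add s).add r).Cong (t.add (s.add r)) :=
  .of_equiv (finCongr (add_assoc t.n s.n r.n)) (Fin.append_assoc _ _ _).symm
    (Fin.append_assoc _ _ _).symm (blocks_submatrix_finCongr_add_assoc _ _ _)

lemma add_right_comm_cong (t s r : Triple R X) : ((t.add s).add r).Cong ((t.add r).add s) :=
  (add_assoc_cong t s r).trans (((Cong.refl t).add (add_comm_cong s r)).trans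
    (add_assoc_cong t r s).symm)

lemma add_left_comm_cong (t s r : Triple R X) : (t.add (s.add r)).Cong (s.add (t.add r)) :=
  (add_assoc_cong t s r).symm.trans (((add_comm_cong t s).add (.refl r)).trans
    (add_assoc_cong s t r))

lemma le_iff_ge : t.Le s ↔ s.Ge t :=
  ⟨fun ⟨A₁, A₂, hx, ha, hC⟩ => ⟨A₂, A₁, ha, hx, hC⟩,
    fun ⟨A₁, A₂, ha, hx, hC⟩ => ⟨A₂, A₁, hx, ha, hC⟩⟩

lemma Ge.refl (t : Triple R X) : t.Ge t :=
  ⟨1, 1, (vecMul_one _).symm, (mulVecX_one _).symm, by simp⟩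

lemma Ge.trans (h : t.Ge s) (h' : s.Ge r) : t.Ge r := by
  obtain ⟨A₁, A₂, ha, hx, hC⟩ := h
  obtain ⟨B₁, B₂, hb, hy, hD⟩ := h'
  refine ⟨B₁ * A₁, B₂ * A₂, by rw [ha, hb, vecMul_vecMul], by rw [hy, hx, mulVecX_mul], ?_⟩
  rw [← Matrix.mul_assoc, hD, Matrix.mul_assoc, hC, Matrix.mul_assoc]

instance : IsTrans (Triple R X) Ge := ⟨fun _ _ _ => Ge.trans⟩

lemma Cong.ge (h : t.Cong s) : t.Ge s := by
  obtain ⟨n, a, C, x⟩ := t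
  obtain ⟨m, b, D, y⟩ := s
  obtain rfl : n = m := h.n_eq
  obtain ⟨U₁, U₂, -, -, ha, hy, hC⟩ := cong_mk_iff.mp h
  exact ⟨U₁, U₂, ha, hy, hC⟩

lemma Ge.add (h : t.Ge t') (h' : s.Ge s') : (t.add s).Ge (t'.add s') := by
  obtain ⟨A₁, A₂, ha, hx, hC⟩ := h
  obtain ⟨B₁, B₂, hb, hy, hD⟩ := h'
  refine ⟨blocks A₁ 0 0 B₁, blocks A₂ 0 0 B₂, ?_, ?_, ?_⟩
  · show Fin.append t.a s.a = Fin.append t'.a s'.a ᵥ* blocks A₁ 0 0 B₁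
    simp [append_vecMul_blocks, ha, hb]
  · show Fin.append t'.x s'.x = mulVecX (blocks A₂ 0 0 B₂) (Fin.append t.x s.x)
    simp [mulVecX_blocks_append, hx, hy]
  · show blocks t'.C 0 0 s'.C * blocks A₁ 0 0 B₁ = blocks A₂ 0 0 B₂ * blocks t.C 0 0 s.C
    simp [blocks_mul_blocks, hC, hD]

lemma zeroA_ge_zeroX (E : Matrix (Fin k) (Fin k) R) (w : Fin k → X) (u : Fin l → R)
    (F : Matrix (Fin l) (Fin l) R) : (⟨k, 0, E, w⟩ : Triple R X).Ge ⟨l, u, F, 0⟩ :=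
  ⟨0, 0, (vecMul_zero _).symm, (zero_mulVecX _).symm, by simp⟩

lemma ge_add_zeroX (t : Triple R X) (u : Fin l → R) (F : Matrix (Fin l) (Fin l) R) :
    t.Ge (t.add ⟨l, u, F, 0⟩) :=
  (cong_add_empty t).ge.trans ((Ge.refl t).add (zeroA_ge_zeroX _ _ _ _))

lemma add_zeroA_ge (t : Triple R X) (E : Matrix (Fin k) (Fin k) R) (w : Fin k → X) :
    (t.add ⟨k, 0, E, w⟩).Ge t :=
  ((Ge.refl t).add (zeroA_ge_zeroX _ _ _ _)).trans (cong_add_empty t).symm.ge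

lemma zeroA_add_zeroA (E₁ : Matrix (Fin k) (Fin k) R) (w₁ : Fin k → X)
    (E₂ : Matrix (Fin l) (Fin l) R) (w₂ : Fin l → X) :
    (⟨k, 0, E₁, w₁⟩ : Triple R X).add ⟨l, 0, E₂, w₂⟩ =
      ⟨k + l, 0, blocks E₁ 0 0 E₂, Fin.append w₁ w₂⟩ := by
  simp only [Triple.add, Fin.append_zero_zero]
  rfl

lemma zeroX_add_zeroX (u₁ : Fin k → R) (F₁ : Matrix (Fin k) (Fin k) R)
    (u₂ : Fin l → R) (F₂ : Matrix (Fin l) (Fin l) R) :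
    (⟨k, u₁, F₁, 0⟩ : Triple R X).add ⟨l, u₂, F₂, 0⟩ =
      ⟨k + l, Fin.append u₁ u₂, blocks F₁ 0 0 F₂, 0⟩ := by
  simp only [Triple.add, Fin.append_zero_zero]
  rfl

lemma Ge.zeroX_add_zeroA_cong (h : t.Ge s) :
    (Triple.add ⟨s.n, s.a, s.C, 0⟩ ⟨t.n, 0, t.C, t.x⟩).Cong (s.add ⟨t.n, -t.a, t.C, t.x⟩) := by
  obtain ⟨A₁, A₂, ha, hx, hC⟩ := h
  refine cong_mk_iff.mpr ⟨blocks 1 A₁ 0 1, blocks 1 A₂ 0 1, isUnit_blocks_one_zero_one _,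
    isUnit_blocks_one_zero_one _, ?_, ?_, ?_⟩
  · simp [append_vecMul_blocks, ha]
  · simp [mulVecX_blocks_append, hx]
  · show blocks s.C 0 0 t.C * _ = _ * blocks s.C 0 0 t.C
    simp [blocks_mul_blocks, hC]

end Triple

namespace IsTrivial
variable [Ring R] [AddCommGroup X] [Module R X] {S : MatSet R} {z : Triple R X}

lemma exists_zeroA_ge (hS : IsMatMultSet S) (hz : IsTrivial S z) :
    ∃ (k : ℕ) (E : Matrix (Fin k) (Fin k) R) (w : Fin k → X),
      E ∈ S k ∧ (⟨k, 0, E, w⟩ : Triple R X).Ge z := by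
  induction hz with
  | zeroA n C x hC => exact ⟨n, C, x, hC, .refl _⟩
  | zeroX n b C hC => exact ⟨n, C, 0, hC, Triple.zeroA_ge_zeroX _ _ _ _⟩
  | add _ _ ih ih' =>
    obtain ⟨k, E, w, hE, h⟩ := ih
    obtain ⟨k', E', w', hE', h'⟩ := ih'
    refine ⟨k + k', blocks E 0 0 E', Fin.append w w', hS.blocks_mem hE hE', ?_⟩
    rw [← Triple.zeroA_add_zeroA]
    exact h.add h'

lemma exists_ge_zeroX (hS : IsMatMultSet S) (hz : IsTrivial S z) :
    ∃ (l : ℕ) (u : Fin l → R) (F : Matrix (Fin l) (Fin l) R),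
      F ∈ S l ∧ z.Ge ⟨l, u, F, 0⟩ := by
  induction hz with
  | zeroA n C x hC => exact ⟨n, 0, C, hC, Triple.zeroA_ge_zeroX _ _ _ _⟩
  | zeroX n b C hC => exact ⟨n, b, C, hC, .refl _⟩
  | add _ _ ih ih' =>
    obtain ⟨l, u, F, hF, h⟩ := ih
    obtain ⟨l', u', F', hF', h'⟩ := ih'
    refine ⟨l + l', Fin.append u u', blocks F 0 0 F', hS.blocks_mem hF hF', ?_⟩
    rw [← Triple.zeroX_add_zeroX]
    exact h.add h'

end IsTrivial

section Characterization
variable [Ring R] [AddCommGroup X] [Module R X] {S : MatSet R} {t s r : Triple R X}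
open Triple

def StablyGe (S : MatSet R) (t s : Triple R X) : Prop :=
  ∃ (k : ℕ) (u : Fin k → R) (E F : Matrix (Fin k) (Fin k) R) (z : Fin k → X),
    E ∈ S k ∧ F ∈ S k ∧ (t.add ⟨k, 0, E, z⟩).Ge (s.add ⟨k, u, F, 0⟩)

def Zigzag (S : MatSet R) (t s : Triple R X) : Prop :=
  ∃ t₁ s₁ : Triple R X, t₁.C ∈ S t₁.n ∧ s₁.C ∈ S s₁.n ∧ t.Le t₁ ∧ t₁.Ge s₁ ∧ s₁.Le s

lemma Sim.symm (h : Sim S t s) : Sim S s t :=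
  let ⟨z₁, z₂, hz₁, hz₂, h⟩ := h
  ⟨z₂, z₁, hz₂, hz₁, h.symm⟩

lemma Sim.trans (h : Sim S t s) (h' : Sim S s r) : Sim S t r := by
  obtain ⟨z₁, z₂, hz₁, hz₂, h⟩ := h
  obtain ⟨w₁, w₂, hw₁, hw₂, h'⟩ := h'
  refine ⟨z₁.add w₁, w₂.add z₂, hz₁.add hw₁, hw₂.add hz₂, ?_⟩
  calc (t.add (z₁.add w₁)).Cong ((t.add z₁).add w₁) := (add_assoc_cong _ _ _).symm
    Cong _ ((s.add z₂).add w₁) := h.add (.refl _)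
    Cong _ ((s.add w₁).add z₂) := add_right_comm_cong _ _ _
    Cong _ ((r.add w₂).add z₂) := h'.add (.refl _)
    Cong _ (r.add (w₂.add z₂)) := add_assoc_cong _ _ _

lemma Triple.Ge.sim (ht : t.C ∈ S t.n) (hs : s.C ∈ S s.n) (h : t.Ge s) : Sim S t s := by
  refine ⟨Triple.add ⟨s.n, s.a, s.C, 0⟩ ⟨t.n, 0, t.C, t.x⟩,
    Triple.add ⟨t.n, t.a, t.C, 0⟩ ⟨t.n, 0, t.C, t.x⟩,
    (IsTrivial.zeroX _ _ _ hs).add (.zeroA _ _ _ ht),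
    (IsTrivial.zeroX _ _ _ ht).add (.zeroA _ _ _ ht), ?_⟩
  calc (t.add _).Cong (t.add (s.add ⟨t.n, -t.a, t.C, t.x⟩)) :=
      (Cong.refl t).add h.zeroX_add_zeroA_cong
    Cong _ (s.add (t.add ⟨t.n, -t.a, t.C, t.x⟩)) := add_left_comm_cong _ _ _
    Cong _ _ := (Cong.refl s).add (Ge.refl t).zeroX_add_zeroA_cong.symm

lemma Triple.Le.sim (ht : t.C ∈ S t.n) (hs : s.C ∈ S s.n) (h : t.Le s) : Sim S t s :=
  (le_iff_ge.mp h |>.sim hs ht).symm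

lemma Sim.stablyGe (hS : IsMatMultSet S) (h : Sim S t s) : StablyGe S t s := by
  obtain ⟨z₁, z₂, hz₁, hz₂, hc⟩ := h
  obtain ⟨k, E, w, hE, hEz⟩ := hz₁.exists_zeroA_ge hS
  obtain ⟨l, u, F, hF, hzF⟩ := hz₂.exists_ge_zeroX hS
  have hge : (t.add ⟨k, 0, E, w⟩).Ge (s.add ⟨l, u, F, 0⟩) :=
    ((Ge.refl t).add hEz).trans (hc.ge.trans ((Ge.refl s).add hzF))
  refine ⟨k + l, Fin.append 0 u, blocks E 0 0 1, blocks 1 0 0 F, Fin.append w 0,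
    hS.blocks_mem hE (hS.one_mem l), hS.blocks_mem (hS.one_mem k) hF, ?_⟩
  rw [← zeroA_add_zeroA, ← zeroX_add_zeroX]
  calc (t.add _).Ge ((t.add ⟨k, 0, E, w⟩).add ⟨l, 0, 1, 0⟩) := (add_assoc_cong _ _ _).symm.ge
    Ge _ ((s.add ⟨l, u, F, 0⟩).add ⟨k, 0, 1, 0⟩) := hge.add (zeroA_ge_zeroX _ _ _ _)
    Ge _ _ := ((add_assoc_cong _ _ _).trans ((Cong.refl s).add (add_comm_cong _ _))).ge

lemma StablyGe.zigzag (hS : IsMatMultSet S) (ht : t.C ∈ S t.n) (hs : s.C ∈ S s.n)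
    (h : StablyGe S t s) : Zigzag S t s :=
  let ⟨_, u, E, F, z, hE, hF, h⟩ := h
  ⟨_, _, hS.blocks_mem ht hE, hS.blocks_mem hs hF,
    le_iff_ge.mpr (t.add_zeroA_ge E z), h, le_iff_ge.mpr (s.ge_add_zeroX u F)⟩

lemma Zigzag.sim (ht : t.C ∈ S t.n) (hs : s.C ∈ S s.n) (h : Zigzag S t s) : Sim S t s :=
  let ⟨_, _, ht₁, hs₁, h₁, h₂, h₃⟩ := h
  (h₁.sim ht ht₁).trans ((h₂.sim ht₁ hs₁).trans (h₃.sim hs₁ hs))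

end Characterization

/-- The pseudo-Ore conditions determine the equivalence relation `∼`. -/
theorem sim_characterization [Ring R] [AddCommGroup X] [Module R X] (S : MatSet R)
    (hS : IsMatMultSet S) (t s : Triple R X) (ht : t.C ∈ S t.n) (hs : s.C ∈ S s.n) :
    (Sim S t s ↔
      ∃ (k : ℕ) (u : Fin k → R) (E F : Matrix (Fin k) (Fin k) R) (z : Fin k → X),
        E ∈ S k ∧ F ∈ S k ∧ (t.add ⟨k, 0, E, z⟩).Ge (s.add ⟨k, u, F, 0⟩)) ∧
    (Sim S t s ↔
      ∃ t₁ s₁ : Triple R X, t₁.C ∈ S t₁.n ∧ s₁.C ∈ S s₁.n ∧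
        t.Le t₁ ∧ t₁.Ge s₁ ∧ s₁.Le s) := by
  have h₁₂ : Sim S t s → StablyGe S t s := fun h => h.stablyGe hS
  have h₂₃ : StablyGe S t s → Zigzag S t s := fun h => h.zigzag hS ht hs
  have h₃₁ : Zigzag S t s → Sim S t s := fun h => h.sim ht hs
  exact ⟨⟨h₁₂, h₃₁ ∘ h₂₃⟩, ⟨h₂₃ ∘ h₁₂, h₃₁⟩⟩
end

section
/- If a ∈ R^m, C₂ ∈ Σ_m, C₁ ∈ Σ_n, x ∈ X^n, and A₁, A₂ are m×n matrices over R with C₂A₁ = A₂C₁, then (aA₁, C₁, x^t) ∼ (a, C₂, A₂x^t) in the construction of Σ⁻¹X. -/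
open Matrix

variable {R X : Type*}

/-- Lemma 2.4 of Beachy 1993: if `C₂A₁ = A₂C₁` then `(aA₁,C₁,xᵗ) ∼ (a,C₂,A₂xᵗ)`. -/
theorem pseudo_ore [Ring R] [AddCommGroup X] [Module R X] (S : MatSet R)
    (hS : IsMatMultSet S) {n m : ℕ} (a : Fin m → R)
    (C₁ : Matrix (Fin n) (Fin n) R) (C₂ : Matrix (Fin m) (Fin m) R)
    (hC₁ : C₁ ∈ S n) (hC₂ : C₂ ∈ S m) (x : Fin n → X)
    (A₁ A₂ : Matrix (Fin m) (Fin n) R) (h : C₂ * A₁ = A₂ * C₁) :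
    Sim S (⟨n, a ᵥ* A₁, C₁, x⟩ : Triple R X) ⟨m, a, C₂, mulVecX A₂ x⟩ := by
  classical
  refine ⟨⟨m, a, C₂, 0⟩, ⟨n, 0, C₁, x⟩,
    IsTrivial.zeroX m a C₂ hC₂, IsTrivial.zeroA n C₁ x hC₁, ?_⟩
  have hnm : n + m = m + n := Nat.add_comm n m
  let e : Fin n ⊕ Fin m ≃ Fin (n + m) := finSumFinEquiv
  let f : Fin m ⊕ Fin n ≃ Fin (m + n) := finSumFinEquiv
  let g : Fin (n + m) ≃ Fin m ⊕ Fin n := (finCongr hnm).trans f.symm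
  have key : ∀ (B : Matrix (Fin m) (Fin n) R),
      IsUnit ((Matrix.fromBlocks B 1 1 0).submatrix ⇑g ⇑e.symm) := by
    intro B
    have h1 : (Matrix.fromBlocks B 1 1 0).submatrix ⇑g ⇑e.symm *
        (Matrix.fromBlocks 0 1 1 (-B)).submatrix ⇑e.symm ⇑g = 1 := by
      simp only [Matrix.submatrix_mul_equiv, Matrix.fromBlocks_multiply]
      simp [Matrix.fromBlocks_one, Matrix.submatrix_one_equiv]
    have h2 : (Matrix.fromBlocks 0 1 1 (-B)).submatrix ⇑e.symm ⇑g *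
        (Matrix.fromBlocks B 1 1 0).submatrix ⇑g ⇑e.symm = 1 := by
      simp only [Matrix.submatrix_mul_equiv, Matrix.fromBlocks_multiply]
      simp [Matrix.fromBlocks_one, Matrix.submatrix_one_equiv]
    exact ⟨⟨_, _, h1, h2⟩, rfl⟩
  refine ⟨hnm, (Matrix.fromBlocks A₁ 1 1 0).submatrix ⇑g ⇑e.symm,
    (Matrix.fromBlocks A₂ 1 1 0).submatrix ⇑g ⇑e.symm, key A₁, key A₂, ?_, ?_, ?_⟩
  · -- a-part
    show Fin.append (a ᵥ* A₁) a =
      (fun j => Fin.append a 0 (Fin.cast hnm j)) ᵥ*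
        (Matrix.fromBlocks A₁ 1 1 0).submatrix ⇑g ⇑e.symm
    rw [Matrix.submatrix_vecMul_equiv]
    have hb : ((fun j => Fin.append a (0 : Fin n → R) (Fin.cast hnm j)) ∘ ⇑g.symm)
        = Sum.elim a 0 := by
      funext s
      cases s <;> simp [g, f]
    rw [hb]
    funext j
    obtain ⟨s, rfl⟩ := e.surjective j
    cases s with
    | inl k =>
      simp [e, Matrix.vecMul, dotProduct, Fintype.sum_sum_type]
    | inr k =>
      simp [e, Matrix.vecMul, dotProduct, Fintype.sum_sum_type,
        Matrix.one_apply, Finset.sum_ite_eq']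
  · -- x-part
    show (fun i => Fin.append (mulVecX A₂ x) x (Fin.cast hnm i)) =
      mulVecX ((Matrix.fromBlocks A₂ 1 1 0).submatrix ⇑g ⇑e.symm) (Fin.append x 0)
    funext i
    obtain ⟨s, rfl⟩ := g.symm.surjective i
    rw [show mulVecX ((Matrix.fromBlocks A₂ 1 1 0).submatrix ⇑g ⇑e.symm)
        (Fin.append x 0) (g.symm s)
        = ∑ t : Fin n ⊕ Fin m, Matrix.fromBlocks A₂ 1 1 0 s t • Fin.append x 0 (e t) from by
      rw [mulVecX, ← Equiv.sum_comp e]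
      simp [g]]
    have hc : Fin.cast hnm (g.symm s) = f s := by simp [g]
    rw [hc]
    cases s with
    | inl k =>
      simp [f, e, mulVecX, Fintype.sum_sum_type]
    | inr k =>
      simp [f, e, Fintype.sum_sum_type, Matrix.one_apply, Finset.sum_ite_eq']
  · -- C-part
    show ((Matrix.fromBlocks C₂ 0 0 C₁).submatrix ⇑f.symm ⇑f.symm).submatrix
        (Fin.cast hnm) (Fin.cast hnm) *
        (Matrix.fromBlocks A₁ 1 1 0).submatrix ⇑g ⇑e.symm
      = (Matrix.fromBlocks A₂ 1 1 0).submatrix ⇑g ⇑e.symm *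
        (Matrix.fromBlocks C₁ 0 0 C₂).submatrix ⇑e.symm ⇑e.symm
    rw [Matrix.submatrix_submatrix]
    have hgg : (⇑f.symm ∘ Fin.cast hnm) = ⇑g := rfl
    rw [hgg, Matrix.submatrix_mul_equiv, Matrix.submatrix_mul_equiv]
    congr 1
    simp [Matrix.fromBlocks_multiply, h]
end
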